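/- Let k ≥ 1, w ≥ 1, n = w + k − 1, and let D : Fin w → (Fin k → Bool) → ℝ be a family of window cost functions. For t : Fin n → Bool and j ∈ Fin w, let W_j(t) : Fin k → Bool be the window W_j(t)(i) = t(j + i). Define T : Fin w → (Fin k → Bool) → ℝ recursively by T(0, x) = D(0, x) and T(j+1, y) = D(j+1, y) + min_{b ∈ Bool} T(j, cons(b, y)), where cons(b, y)(0) = b and cons(b, y)(i+1) = y(i) for i < k−1. Then the minimum over all t : Fin n → Bool of the total cost Σ_{j ∈ Fin w} D(j, W_j(t)) equals min_{y : Fin k → Bool} T(w−1, y). -/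

import Mathlib

/-!
Parametrize a sequence of length `j + k` by its first `j` bits `s` and its last window `y`.
Then `Tdp D j y` is the minimum over `s` of the total cost of the first `j + 1` windows:
splitting off the last bit `b` of `s` turns the last window of the shorter sequence into
`consDrop b y`, so the cost decomposes as `D (j + 1) y` plus the cost of that shorter sequence,
and minimizing over `b` is exactly the recursion of `Tdp`. Minimizing also over `y` ranges over
all sequences of length `(w - 1) + k = n`.
-/

/-- Prepend the bit `b` to the window `y`, dropping the last entry of `y`. -/
def consDrop {k : ℕ} (b : Bool) (y : Fin k → Bool) : Fin k → Bool :=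
  fun i => if i.1 = 0 then b else y ⟨i.1 - 1, by have := i.isLt; omega⟩

/-- The dynamic program for minimizing a sum of window costs over all binary
sequences: `Tdp D j y` is the minimal total cost of the first `j+1` windows
subject to the `(j+1)`-st window being `y`. -/
def Tdp {k : ℕ} (D : ℕ → (Fin k → Bool) → ℝ) : ℕ → (Fin k → Bool) → ℝ
  | 0, x => D 0 x
  | j + 1, y =>
      D (j + 1) y + min (Tdp D j (consDrop true y)) (Tdp D j (consDrop false y))

open Finset

namespace Finset

theorem inf'_univ_fin_snoc {α β : Type*} [Fintype α] [Nonempty α] [SemilatticeInf β] {n : ℕ}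
    (f : (Fin (n + 1) → α) → β) :
    univ.inf' univ_nonempty f =
      univ.inf' univ_nonempty fun a => univ.inf' univ_nonempty fun s : Fin n → α =>
        f (Fin.snoc s a) := by
  refine eq_of_forall_le_iff fun c => ?_
  simp only [le_inf'_iff, mem_univ, true_implies]
  exact ⟨fun h a s => h _, fun h t => Fin.snoc_init_self t ▸ h _ _⟩

theorem inf'_univ_bool {β : Type*} [SemilatticeInf β] (f : Bool → β) :
    univ.inf' univ_nonempty f = f true ⊓ f false := by
  simp [Fintype.univ_bool]

theorem inf'_add_const {ι G : Type*} [AddGroup G] [SemilatticeInf G] [AddRightMono G]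
    {s : Finset ι} (hs : s.Nonempty) (f : ι → G) (a : G) :
    s.inf' hs (fun i => f i + a) = s.inf' hs f + a :=
  (map_finset_inf' (OrderIso.addRight a) hs f).symm

end Finset

def window {α : Type*} (k : ℕ) (u : ℕ → α) (m : ℕ) : Fin k → α :=
  fun i => u (m + i)

def windowCost {k : ℕ} (D : ℕ → (Fin k → Bool) → ℝ) (j : ℕ) (u : ℕ → Bool) : ℝ :=
  ∑ m ∈ range (j + 1), D m (window k u m)

/-- The sequence `s ++ y`, continued by `false` after position `j + k`. -/
def appendSeq {j k : ℕ} (s : Fin j → Bool) (y : Fin k → Bool) : ℕ → Bool :=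
  fun p => if h : p < j then s ⟨p, h⟩ else if h' : p - j < k then y ⟨p - j, h'⟩ else false

section WindowCost

variable {k : ℕ} (D : ℕ → (Fin k → Bool) → ℝ)

theorem windowCost_congr {j : ℕ} {u v : ℕ → Bool} (h : ∀ p < j + k, u p = v p) :
    windowCost D j u = windowCost D j v := by
  refine sum_congr rfl fun m hm => congrArg (D m) (funext fun i => h _ ?_)
  have := mem_range.mp hm
  omega

theorem windowCost_succ (j : ℕ) (u : ℕ → Bool) :
    windowCost D (j + 1) u = windowCost D j u + D (j + 1) (window k u (j + 1)) :=
  sum_range_succ _ _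

theorem window_appendSeq {j : ℕ} (s : Fin j → Bool) (y : Fin k → Bool) :
    window k (appendSeq s y) j = y := by
  funext i
  simp [window, appendSeq]

theorem appendSeq_snoc_apply {j p : ℕ} (s : Fin j → Bool) (b : Bool) (y : Fin k → Bool)
    (hp : p < j + k) :
    appendSeq (Fin.snoc s b : Fin (j + 1) → Bool) y p = appendSeq s (consDrop b y) p := by
  rcases lt_trichotomy p j with hlt | rfl | hgt
  · simp [appendSeq, hlt, Nat.lt_succ_of_lt hlt, Fin.snoc, Fin.castLT]
  · simp [appendSeq, consDrop, Fin.snoc, show 0 < k by omega]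
  · simp only [appendSeq, consDrop, dif_neg (show ¬p < j + 1 by omega), dif_neg hgt.not_gt,
      dif_pos (show p - (j + 1) < k by omega), dif_pos (show p - j < k by omega),
      if_neg (show p - j ≠ 0 by omega)]
    congr 2

theorem windowCost_appendSeq_snoc {j : ℕ} (s : Fin j → Bool) (b : Bool) (y : Fin k → Bool) :
    windowCost D (j + 1) (appendSeq (Fin.snoc s b : Fin (j + 1) → Bool) y) =
      windowCost D j (appendSeq s (consDrop b y)) + D (j + 1) y := by
  rw [windowCost_succ, window_appendSeq,
    windowCost_congr D fun p hp => appendSeq_snoc_apply s b y hp]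

theorem Tdp_eq_inf' (j : ℕ) (y : Fin k → Bool) :
    Tdp D j y = univ.inf' univ_nonempty fun s : Fin j → Bool => windowCost D j (appendSeq s y) := by
  induction j generalizing y with
  | zero =>
    have h (s : Fin 0 → Bool) : windowCost D 0 (appendSeq s y) = D 0 y := by
      rw [windowCost, sum_range_one, window_appendSeq]
    simp only [h, inf'_const, Tdp]
  | succ j ih =>
    simp only [inf'_univ_fin_snoc, windowCost_appendSeq_snoc, inf'_add_const, ← ih,
      inf'_univ_bool]
    rw [Tdp, add_comm]

end WindowCost

theorem appendSeq_restrict_apply {j k n : ℕ} (hn : n = j + k) (t : Fin n → Bool) {p : ℕ}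
    (hp : p < n) :
    appendSeq (fun q : Fin j => t ⟨q, by omega⟩) (fun i : Fin k => t ⟨j + i, by omega⟩) p =
      t ⟨p, hp⟩ := by
  unfold appendSeq
  split_ifs with hpj hpk
  · rfl
  · exact congrArg t (Fin.ext (by simp only; omega))
  · omega

theorem sum_window_eq_windowCost {k w n : ℕ} (hw : 1 ≤ w) (hn : n = w + k - 1)
    (D : Fin w → (Fin k → Bool) → ℝ) (t : Fin n → Bool) {u : ℕ → Bool}
    (hu : ∀ p (hp : p < n), u p = t ⟨p, hp⟩) :
    ∑ j : Fin w, D j (fun i : Fin k => t ⟨j.1 + i.1, by omega⟩) =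
      windowCost (fun j x => if hj : j < w then D ⟨j, hj⟩ x else 0) (w - 1) u := by
  rw [windowCost, Nat.sub_add_cancel hw, ← Fin.sum_univ_eq_sum_range]
  refine sum_congr rfl fun j _ => ?_
  rw [dif_pos j.isLt]
  exact congrArg (D j) (funext fun i => (hu _ _).symm)

/-- Correctness of the dynamic program: the minimum total window cost over all
binary sequences of length `n = w + k - 1` equals the minimum over the final
window of the DP value. -/
theorem dp_window_cost_correct {k w n : ℕ} (hw : 1 ≤ w)
    (hn : n = w + k - 1) (D : Fin w → (Fin k → Bool) → ℝ) :
    (Finset.univ.inf' Finset.univ_nonempty fun t : Fin n → Bool =>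
        ∑ j : Fin w, D j fun i : Fin k =>
          t ⟨j.1 + i.1, by have := j.isLt; have := i.isLt; omega⟩) =
      Finset.univ.inf' Finset.univ_nonempty fun y : Fin k → Bool =>
        Tdp (fun j x => if hj : j < w then D ⟨j, hj⟩ x else 0) (w - 1) y := by
  have hn' : n = w - 1 + k := by omega
  simp only [Tdp_eq_inf']
  apply le_antisymm
  · refine le_inf' _ _ fun y _ => le_inf' _ _ fun s _ => ?_
    exact inf'_le_of_le _ (mem_univ fun p : Fin n => appendSeq s y p)
      (sum_window_eq_windowCost hw hn D (fun p : Fin n => appendSeq s y p) fun _ _ => rfl).le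
  · refine le_inf' _ _ fun t _ => ?_
    refine inf'_le_of_le _ (mem_univ fun i : Fin k => t ⟨w - 1 + i, by omega⟩) ?_
    refine inf'_le_of_le _ (mem_univ fun q : Fin (w - 1) => t ⟨q, by omega⟩) ?_
    exact (sum_window_eq_windowCost hw hn D t fun p hp => appendSeq_restrict_apply hn' t hp).ge
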